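/- arXiv:2411.03828 — 2 statements merged into one kernel-verified Lean document; each statement's English description precedes it below -/
import Mathlib

section
/- Let F : ℝ → [0,1] be a nondecreasing distribution function with density f ≥ 0, let β > 0, and let g_{β,1}(x) = β f(x)/(1 + (β − 1)F(x))² be the density of the oMO distribution G_{β,1}. If 0 < β ≤ 1, the density ratio g_{β,1}(x)/f(x) = β/(1 + (β − 1)F(x))² is nondecreasing in x, so F ≤_lr G_{β,1}. If β ≥ 1, this ratio is nonincreasing in x, so F ≥_lr G_{β,1}. -/
/-! The ratio is `β / h(F x)²` with `h t = 1 + (β - 1) t = (1 - t) + β t`, which is positive on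
`[0, 1]` and, composed with the nondecreasing `F`, is nonincreasing for `β ≤ 1` and nondecreasing
for `β ≥ 1`; a positive constant divided by the square of a positive function reverses its
monotonicity. -/

lemma one_add_sub_one_mul_pos {β t : ℝ} (hβ : 0 < β) (ht₀ : 0 ≤ t) (ht₁ : t ≤ 1) :
    0 < 1 + (β - 1) * t := by
  rcases ht₀.eq_or_lt with rfl | ht
  · norm_num
  · calc 0 < (1 - t) + β * t := add_pos_of_nonneg_of_pos (sub_nonneg.2 ht₁) (mul_pos hβ ht)
      _ = 1 + (β - 1) * t := by ring

section ConstDivSq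

variable {α : Type*} [Preorder α] {g : α → ℝ} {c : ℝ}

lemma Antitone.monotone_const_div_sq (hg : Antitone g) (hpos : ∀ x, 0 < g x) (hc : 0 ≤ c) :
    Monotone fun x => c / g x ^ 2 := fun _ _ hxy =>
  div_le_div_of_nonneg_left hc (pow_pos (hpos _) 2) (pow_le_pow_left₀ (hpos _).le (hg hxy) 2)

lemma Monotone.antitone_const_div_sq (hg : Monotone g) (hpos : ∀ x, 0 < g x) (hc : 0 ≤ c) :
    Antitone fun x => c / g x ^ 2 := fun _ _ hxy =>
  div_le_div_of_nonneg_left hc (pow_pos (hpos _) 2) (pow_le_pow_left₀ (hpos _).le (hg hxy) 2)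

end ConstDivSq

theorem oMO_likelihood_ratio_theta_one_general
    (F : ℝ → ℝ) (hFmono : Monotone F)
    (hFrange : ∀ x, 0 ≤ F x ∧ F x ≤ 1)
    (β : ℝ) (hβ : 0 < β) :
    (β ≤ 1 → Monotone (fun x => β / (1 + (β - 1) * F x) ^ 2)) ∧
    (1 ≤ β → Antitone (fun x => β / (1 + (β - 1) * F x) ^ 2)) := by
  have hpos : ∀ x, 0 < 1 + (β - 1) * F x := fun x =>
    one_add_sub_one_mul_pos hβ (hFrange x).1 (hFrange x).2
  refine ⟨fun hβ₁ => ?_, fun hβ₁ => ?_⟩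
  · exact ((hFmono.const_mul_of_nonpos (sub_nonpos.2 hβ₁)).const_add 1).monotone_const_div_sq
      hpos hβ.le
  · exact ((hFmono.const_mul (sub_nonneg.2 hβ₁)).const_add 1).antitone_const_div_sq hpos hβ.le

/-- For a nondecreasing distribution function `F` with density
`f ≥ 0` and `β > 0`, the likelihood ratio of the oMO distribution `G_{β,1}`
to `F`, namely `g_{β,1}(x)/f(x) = β / (1 + (β-1) F(x))²`, is nondecreasing if
`0 < β ≤ 1` (so `F ≤_lr G_{β,1}`) and nonincreasing if `β ≥ 1`
(so `F ≥_lr G_{β,1}`). -/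
theorem oMO_likelihood_ratio_theta_one
    (F f : ℝ → ℝ) (hFmono : Monotone F)
    (hFrange : ∀ x, 0 ≤ F x ∧ F x ≤ 1) (hf : ∀ x, 0 ≤ f x)
    (β : ℝ) (hβ : 0 < β) :
    (β ≤ 1 → Monotone (fun x => β / (1 + (β - 1) * F x) ^ 2)) ∧
    (1 ≤ β → Antitone (fun x => β / (1 + (β - 1) * F x) ^ 2)) :=
  oMO_likelihood_ratio_theta_one_general F hFmono hFrange β hβ
end

section
/- Let F be a baseline distribution function on [0,∞) with 0 ≤ F < 1 whose odds function Λ_F(x) = F(x)/(1 − F(x)) is nonnegative, and let α, α₁ ≥ 0 and β, β₁, θ, θ₁ > 0. Define ψ(x) = β₁((β((α + Λ_F(x))^θ − α^θ) + α₁)^{θ₁} − α₁^{θ₁}) = K_{α₁,β₁,θ₁}^{-1} ∘ G_{α,β,θ}(x). If Λ_F is convex on [0,∞) (F ∈ IOR) and θ, θ₁ ≥ 1, then ψ is convex on [0,∞), i.e. G_{α,β,θ} ≤_c K_{α₁,β₁,θ₁}. If Λ_F is concave on [0,∞) (F ∈ DOR) and θ, θ₁ ≤ 1, then ψ is concave on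 [0,∞), i.e. K_{α₁,β₁,θ₁} ≤_c G_{α,β,θ}. -/
open Real Set

/-! Both odds transformations involved have the shape `t ↦ b ((a + t)^p - a^p)`: this maps `Λ_F` to
`Λ_G`, and `K⁻¹(u)` is this map with parameters `(α₁, β₁, θ₁)` applied to the odds `u / (1 - u)`.
On `[0, ∞)` such a map is nonnegative and monotone, convex for `p ≥ 1` and concave for `p ≤ 1`.
Since a convex (concave) monotone function of a convex (concave) function is again convex (concave),
`ψ`, the composition of two such maps with `Λ_F ≥ 0`, inherits the convexity (concavity) of `Λ_F`. -/

section Composition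

variable {𝕜 E β α : Type*} [Semiring 𝕜] [PartialOrder 𝕜] [AddCommMonoid E] [AddCommMonoid β]
  [PartialOrder β] [AddCommMonoid α] [PartialOrder α] [SMul 𝕜 E] [SMul 𝕜 β] [SMul 𝕜 α]
  {s : Set E} {t : Set β} {f : E → β} {g : β → α}

theorem ConvexOn.comp_of_mapsTo (hg : ConvexOn 𝕜 t g) (hf : ConvexOn 𝕜 s f)
    (hg' : MonotoneOn g t) (hst : MapsTo f s t) : ConvexOn 𝕜 s (g ∘ f) :=
  ⟨hf.1, fun _ hx _ hy _ _ ha hb hab =>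
    (hg' (hst (hf.1 hx hy ha hb hab)) (hg.1 (hst hx) (hst hy) ha hb hab)
      (hf.2 hx hy ha hb hab)).trans (hg.2 (hst hx) (hst hy) ha hb hab)⟩

theorem ConcaveOn.comp_of_mapsTo (hg : ConcaveOn 𝕜 t g) (hf : ConcaveOn 𝕜 s f)
    (hg' : MonotoneOn g t) (hst : MapsTo f s t) : ConcaveOn 𝕜 s (g ∘ f) :=
  ⟨hf.1, fun _ hx _ hy _ _ ha hb hab =>
    (hg.2 (hst hx) (hst hy) ha hb hab).trans
      (hg' (hg.1 (hst hx) (hst hy) ha hb hab) (hst (hf.1 hx hy ha hb hab))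
        (hf.2 hx hy ha hb hab))⟩

end Composition

noncomputable section

def oddsTransform (a b p : ℝ) (t : ℝ) : ℝ := b * ((a + t) ^ p - a ^ p)

variable {a b p : ℝ}

theorem monotoneOn_oddsTransform (ha : 0 ≤ a) (hb : 0 ≤ b) (hp : 0 ≤ p) :
    MonotoneOn (oddsTransform a b p) (Ici 0) := fun x hx y _ hxy => by
  have : (a + x) ^ p ≤ (a + y) ^ p := rpow_le_rpow (add_nonneg ha hx) (by linarith) hp
  unfold oddsTransform
  gcongr

theorem mapsTo_oddsTransform (ha : 0 ≤ a) (hb : 0 ≤ b) (hp : 0 ≤ p) :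
    MapsTo (oddsTransform a b p) (Ici 0) (Ici 0) := fun x hx => by
  simpa [oddsTransform] using monotoneOn_oddsTransform ha hb hp self_mem_Ici hx hx

theorem Ici_subset_preimage_add_left (ha : 0 ≤ a) : Ici (0 : ℝ) ⊆ (fun z => a + z) ⁻¹' Ici 0 :=
  fun _ hx => add_nonneg ha hx

theorem convexOn_oddsTransform (ha : 0 ≤ a) (hb : 0 ≤ b) (hp : 1 ≤ p) :
    ConvexOn ℝ (Ici 0) (oddsTransform a b p) := by
  have := ((((convexOn_rpow hp).translate_right a).subset (Ici_subset_preimage_add_left ha)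
    (convex_Ici 0)).add_const (-a ^ p)).smul hb
  exact this.congr fun x _ => by simp [oddsTransform, sub_eq_add_neg]

theorem concaveOn_oddsTransform (ha : 0 ≤ a) (hb : 0 ≤ b) (hp₀ : 0 ≤ p) (hp₁ : p ≤ 1) :
    ConcaveOn ℝ (Ici 0) (oddsTransform a b p) := by
  have := ((((concaveOn_rpow hp₀ hp₁).translate_right a).subset
    (Ici_subset_preimage_add_left ha) (convex_Ici 0)).add_const (-a ^ p)).smul hb
  exact this.congr fun x _ => by simp [oddsTransform, sub_eq_add_neg]

end

/-- Convex transform order between the d-oMO distribution and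
the enlarged log-logistic family.  With
`ψ(x) = β₁((β((α + Λ_F(x))^θ - α^θ) + α₁)^{θ₁} - α₁^{θ₁})
      = K_{α₁,β₁,θ₁}⁻¹ ∘ G_{α,β,θ}(x)`:
if `Λ_F` is convex on `[0,∞)` (`F ∈ IOR`) and `θ, θ₁ ≥ 1`, then `ψ` is convex
on `[0,∞)` (`G_{α,β,θ} ≤_c K_{α₁,β₁,θ₁}`); if `Λ_F` is concave on `[0,∞)`
(`F ∈ DOR`) and `θ, θ₁ ≤ 1`, then `ψ` is concave on `[0,∞)`
(`K_{α₁,β₁,θ₁} ≤_c G_{α,β,θ}`). -/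
theorem doMO_ELL_convex_transform_order
    (F Λ : ℝ → ℝ)
    (hrange : ∀ x ∈ Set.Ici (0 : ℝ), 0 ≤ F x ∧ F x < 1)
    (hΛdef : ∀ x ∈ Set.Ici (0 : ℝ), Λ x = F x / (1 - F x))
    (α α₁ : ℝ) (hα : 0 ≤ α) (hα₁ : 0 ≤ α₁)
    (β β₁ θ θ₁ : ℝ) (hβ : 0 < β) (hβ₁ : 0 < β₁) (hθ : 0 < θ) (hθ₁ : 0 < θ₁) :
    (ConvexOn ℝ (Set.Ici 0) Λ → 1 ≤ θ → 1 ≤ θ₁ →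
      ConvexOn ℝ (Set.Ici 0) (fun x =>
        β₁ * ((β * ((α + Λ x) ^ θ - α ^ θ) + α₁) ^ θ₁ - α₁ ^ θ₁))) ∧
    (ConcaveOn ℝ (Set.Ici 0) Λ → θ ≤ 1 → θ₁ ≤ 1 →
      ConcaveOn ℝ (Set.Ici 0) (fun x =>
        β₁ * ((β * ((α + Λ x) ^ θ - α ^ θ) + α₁) ^ θ₁ - α₁ ^ θ₁))) := by
  have hΛ : MapsTo Λ (Ici 0) (Ici 0) := fun x hx => by
    rw [mem_Ici, hΛdef x hx]
    exact div_nonneg (hrange x hx).1 (sub_nonneg.2 (hrange x hx).2.le)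
  have hmono := monotoneOn_oddsTransform hα hβ.le hθ.le
  have hmono₁ := monotoneOn_oddsTransform hα₁ hβ₁.le hθ₁.le
  have hmaps := (mapsTo_oddsTransform hα hβ.le hθ.le).comp hΛ
  have hψ : (fun x => β₁ * ((β * ((α + Λ x) ^ θ - α ^ θ) + α₁) ^ θ₁ - α₁ ^ θ₁)) =
      oddsTransform α₁ β₁ θ₁ ∘ oddsTransform α β θ ∘ Λ := by
    ext x
    simp only [oddsTransform, Function.comp_apply, add_comm α₁]
  rw [hψ]
  constructor
  · intro hΛcvx hθ1 hθ₁1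
    exact (convexOn_oddsTransform hα₁ hβ₁.le hθ₁1).comp_of_mapsTo
      ((convexOn_oddsTransform hα hβ.le hθ1).comp_of_mapsTo hΛcvx hmono hΛ) hmono₁ hmaps
  · intro hΛccv hθ1 hθ₁1
    exact (concaveOn_oddsTransform hα₁ hβ₁.le hθ₁.le hθ₁1).comp_of_mapsTo
      ((concaveOn_oddsTransform hα hβ.le hθ.le hθ1).comp_of_mapsTo hΛccv hmono hΛ) hmono₁ hmaps
end
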